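/- Non-uniform smoothness between two iterations of stochastic softmax PG: fix θ ∈ ℝ^K and a sampled action a ∈ [K], set η := (1/12)·‖d(π_θᵀ r)/dθ‖₂ and θ' := θ + η·g_a(θ). Then |(π_{θ'} − π_θ)ᵀ r − ⟨d(π_θᵀ r)/dθ, θ' − θ⟩| ≤ 3·‖d(π_θᵀ r)/dθ‖₂·‖θ' − θ‖₂². -/

import Mathlib

/-!
Write `f θ = π_θᵀ r`. Its Hessian satisfies `‖∇²f(θ) δ‖ ≤ 3 ‖δ‖ ‖∇f(θ)‖`, so along the segment
`t ↦ θ + t δ` the gradient `F t` obeys `‖F' t‖ ≤ 3 ‖δ‖ ‖F t‖`. For `‖δ‖ ≤ 1/6` this forces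
`‖F t‖ ≤ 2 ‖F 0‖` on `[0, 1]`, hence `‖F t - F 0‖ ≤ 6 ‖δ‖ ‖∇f(θ)‖ t`, and integrating
`⟨F t - F 0, δ⟩` over `[0, 1]` gives the remainder bound `3 ‖∇f(θ)‖ ‖δ‖²`.
The stochastic step is that short: `‖g_a(θ)‖ ≤ 2` and `‖∇f(θ)‖ ≤ 1`, so `‖η g_a(θ)‖ ≤ 1/6`.
-/

open Finset Real Filter

/-- Softmax policy: `π_θ(a) = exp(θ(a)) / Σ_{a'} exp(θ(a'))`. -/
noncomputable def softmax {K : ℕ} (θ : Fin K → ℝ) (a : Fin K) : ℝ :=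
  Real.exp (θ a) / ∑ a', Real.exp (θ a')

/-- Expected reward `π_θᵀ r`. -/
noncomputable def expReward {K : ℕ} (r θ : Fin K → ℝ) : ℝ :=
  ∑ a, softmax θ a * r a

/-- Policy gradient component `(d π_θᵀ r / dθ)(a) = π_θ(a)·(r(a) − π_θᵀ r)`. -/
noncomputable def pgrad {K : ℕ} (r θ : Fin K → ℝ) (a : Fin K) : ℝ :=
  softmax θ a * (r a - expReward r θ)

/-- Euclidean norm of the policy gradient. -/
noncomputable def pgradNorm {K : ℕ} (r θ : Fin K → ℝ) : ℝ :=
  Real.sqrt (∑ a, pgrad r θ a ^ 2)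

/-- On-policy IS stochastic softmax policy gradient for sampled action `a`:
`g_a(θ)(i) = 1{i = a}·r(a) − π_θ(i)·r(a)`. -/
noncomputable def stochPG {K : ℕ} (r : Fin K → ℝ) (a : Fin K) (θ : Fin K → ℝ)
    (i : Fin K) : ℝ :=
  (if i = a then r a else 0) - softmax θ i * r a

open WithLp

section EuclideanNorm

variable {ι : Type*} [Fintype ι]

lemma norm_toLp_sq (x : ι → ℝ) : ‖toLp 2 x‖ ^ 2 = ∑ i, x i ^ 2 :=
  EuclideanSpace.real_norm_sq_eq _

lemma abs_apply_le_norm_toLp (x : ι → ℝ) (i : ι) : |x i| ≤ ‖toLp 2 x‖ :=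
  PiLp.norm_apply_le (toLp 2 x) i

lemma abs_sum_mul_le_norm_toLp_mul (x y : ι → ℝ) :
    |∑ i, x i * y i| ≤ ‖toLp 2 x‖ * ‖toLp 2 y‖ := by
  rw [mul_comm]
  simpa [EuclideanSpace.inner_toLp_toLp, dotProduct] using
    abs_real_inner_le_norm (toLp 2 y) (toLp 2 x)

lemma norm_toLp_mul_le (x y : ι → ℝ) {c : ℝ} (hc : 0 ≤ c) (hy : ∀ i, |y i| ≤ c) :
    ‖toLp 2 (x * y)‖ ≤ ‖toLp 2 x‖ * c := by
  rw [← pow_le_pow_iff_left₀ (norm_nonneg _) (by positivity) two_ne_zero, mul_pow,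
    norm_toLp_sq, norm_toLp_sq, sum_mul]
  refine sum_le_sum fun i _ => ?_
  rw [Pi.mul_apply, mul_pow]
  exact mul_le_mul_of_nonneg_left (sq_le_sq' (abs_le.1 (hy i)).1 (abs_le.1 (hy i)).2) (sq_nonneg _)

end EuclideanNorm

section SegmentBounds

variable {E : Type*} [NormedAddCommGroup E] [NormedSpace ℝ E]

lemma norm_sub_le_of_norm_deriv_le_mul_norm {F F' : ℝ → E} {c : ℝ} (hc₀ : 0 ≤ c)
    (hc : c ≤ 1 / 2) (hF : ∀ t, HasDerivAt F (F' t) t)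
    (hF' : ∀ t ∈ Set.Icc (0 : ℝ) 1, ‖F' t‖ ≤ c * ‖F t‖) {t : ℝ} (ht : t ∈ Set.Icc (0 : ℝ) 1) :
    ‖F t - F 0‖ ≤ 2 * c * ‖F 0‖ * t := by
  have hFc : Continuous F := continuous_iff_continuousAt.2 fun s => (hF s).continuousAt
  obtain ⟨s, hs, hmax⟩ :=
    isCompact_Icc.exists_isMaxOn (Set.nonempty_Icc.2 zero_le_one) hFc.norm.continuousOn
  have hmvt : ∀ u ∈ Set.Icc (0 : ℝ) 1, ‖F u - F 0‖ ≤ c * ‖F s‖ * u := fun u hu => by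
    simpa using norm_image_sub_le_of_norm_deriv_le_segment'
      (fun x _ => (hF x).hasDerivWithinAt) (fun x hx => (hF' x (Set.Ico_subset_Icc_self hx)).trans
        (mul_le_mul_of_nonneg_left (hmax (Set.Ico_subset_Icc_self hx)) hc₀)) u hu
  -- at the maximiser `s`: `‖F s‖ ≤ ‖F 0‖ + c s ‖F s‖ ≤ ‖F 0‖ + ‖F s‖ / 2`
  have hmax_le : ‖F s‖ ≤ 2 * ‖F 0‖ := by
    have hcs : c * s ≤ 1 / 2 := by nlinarith [hs.1, hs.2]
    nlinarith [norm_le_insert' (F s) (F 0), hmvt s hs,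
      mul_le_mul_of_nonneg_right hcs (norm_nonneg (F s))]
  calc ‖F t - F 0‖ ≤ c * ‖F s‖ * t := hmvt t ht
    _ ≤ c * (2 * ‖F 0‖) * t := by gcongr; exact ht.1
    _ = 2 * c * ‖F 0‖ * t := by ring

end SegmentBounds

lemma abs_sub_sub_deriv_le_of_abs_deriv_sub_le {f f' : ℝ → ℝ} {C : ℝ}
    (hf : ∀ t, HasDerivAt f (f' t) t) (hf' : ∀ t ∈ Set.Icc (0 : ℝ) 1, |f' t - f' 0| ≤ C * t) :
    |f 1 - f 0 - f' 0| ≤ C / 2 := by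
  have hg (t : ℝ) : HasDerivAt (fun s => f s - f 0 - s * f' 0) (f' t - f' 0) t :=
    ((hf t).sub_const (f 0)).sub (hasDerivAt_mul_const (f' 0))
  have hB (t : ℝ) : HasDerivAt (fun s => C / 2 * s ^ 2) (C * t) t :=
    ((hasDerivAt_pow 2 t).const_mul (C / 2)).congr_deriv (by ring)
  simpa using image_norm_le_of_norm_deriv_right_le_deriv_boundary
    (continuous_iff_continuousAt.2 fun t => (hg t).continuousAt).continuousOn
    (fun t _ => (hg t).hasDerivWithinAt) (by simp) hB
    (fun t ht => hf' t (Set.Ico_subset_Icc_self ht)) (Set.right_mem_Icc.2 zero_le_one)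

section Softmax

variable {K : ℕ} [NeZero K]

lemma sum_exp_pos (θ : Fin K → ℝ) : 0 < ∑ a, exp (θ a) :=
  sum_pos (fun _ _ => exp_pos _) univ_nonempty

lemma softmax_pos (θ : Fin K → ℝ) (i : Fin K) : 0 < softmax θ i :=
  div_pos (exp_pos _) (sum_exp_pos θ)

lemma sum_softmax (θ : Fin K → ℝ) : ∑ i, softmax θ i = 1 := by
  simp only [softmax, ← sum_div, div_self (sum_exp_pos θ).ne']

lemma softmax_le_one (θ : Fin K → ℝ) (i : Fin K) : softmax θ i ≤ 1 :=
  sum_softmax θ ▸ single_le_sum (fun j _ => (softmax_pos θ j).le) (mem_univ i)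

lemma norm_toLp_softmax_le_one (θ : Fin K → ℝ) : ‖toLp 2 (softmax θ)‖ ≤ 1 := by
  rw [← pow_le_pow_iff_left₀ (norm_nonneg _) zero_le_one two_ne_zero, norm_toLp_sq, one_pow,
    ← sum_softmax θ]
  exact sum_le_sum fun i _ => pow_le_of_le_one (softmax_pos θ i).le (softmax_le_one θ i) two_ne_zero

end Softmax

noncomputable def hessVec {K : ℕ} (r θ δ : Fin K → ℝ) : Fin K → ℝ :=
  (pgrad r θ * fun i => δ i - ∑ j, softmax θ j * δ j) - (∑ j, pgrad r θ j * δ j) • softmax θ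

section LineDerivatives

variable {K : ℕ} [NeZero K] (r θ δ : Fin K → ℝ) (t : ℝ)

lemma hasDerivAt_softmax_line (i : Fin K) :
    HasDerivAt (fun s => softmax (θ + s • δ) i)
      (softmax (θ + t • δ) i * (δ i - ∑ j, softmax (θ + t • δ) j * δ j)) t := by
  have hexp (j : Fin K) : HasDerivAt (fun s => exp (θ j + s * δ j))
      (exp (θ j + t * δ j) * δ j) t :=
    ((hasDerivAt_mul_const (δ j)).const_add (θ j)).exp
  refine ((hexp i).fun_div (HasDerivAt.fun_sum fun j _ => hexp j)
    (sum_exp_pos (θ + t • δ)).ne').congr_deriv ?_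
  simp only [softmax, Pi.add_apply, Pi.smul_apply, smul_eq_mul, div_mul_eq_mul_div, ← sum_div]
  field_simp

lemma hasDerivAt_expReward_line :
    HasDerivAt (fun s => expReward r (θ + s • δ))
      (∑ i, pgrad r (θ + t • δ) i * δ i) t := by
  refine (HasDerivAt.fun_sum fun i _ =>
    (hasDerivAt_softmax_line θ δ t i).mul_const (r i)).congr_deriv ?_
  simp only [pgrad, expReward, mul_sub, sub_mul, sum_sub_distrib, mul_right_comm _ (∑ _, _),
    mul_right_comm _ (δ _) (r _), ← sum_mul]
  ring

lemma hasDerivAt_pgrad_line (i : Fin K) :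
    HasDerivAt (fun s => pgrad r (θ + s • δ) i) (hessVec r (θ + t • δ) δ i) t := by
  refine ((hasDerivAt_softmax_line θ δ t i).mul
    ((hasDerivAt_expReward_line r θ δ t).const_sub (r i))).congr_deriv ?_
  simp only [hessVec, pgrad, Pi.sub_apply, Pi.mul_apply, Pi.smul_apply, smul_eq_mul]
  ring

lemma hasDerivAt_toLp_pgrad_line :
    HasDerivAt (fun s => toLp 2 (pgrad r (θ + s • δ))) (toLp 2 (hessVec r (θ + t • δ) δ)) t :=
  (PiLp.hasFDerivAt_toLp 2 _).comp_hasDerivAt t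
    (hasDerivAt_pi.2 fun i => hasDerivAt_pgrad_line r θ δ t i)

end LineDerivatives

section Smoothness

variable {K : ℕ} [NeZero K] (r : Fin K → ℝ)

lemma norm_toLp_hessVec_le (θ δ : Fin K → ℝ) :
    ‖toLp 2 (hessVec r θ δ)‖ ≤ 3 * ‖toLp 2 δ‖ * ‖toLp 2 (pgrad r θ)‖ := by
  set d := ‖toLp 2 δ‖
  set G := ‖toLp 2 (pgrad r θ)‖
  have hA : |∑ j, softmax θ j * δ j| ≤ d :=
    (abs_sum_mul_le_norm_toLp_mul _ _).trans
      (mul_le_of_le_one_left (norm_nonneg _) (norm_toLp_softmax_le_one θ))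
  have h₁ : ‖toLp 2 (pgrad r θ * fun i => δ i - ∑ j, softmax θ j * δ j)‖ ≤ G * (2 * d) :=
    norm_toLp_mul_le _ _ (by positivity) fun i =>
      (abs_sub _ _).trans (by linarith [abs_apply_le_norm_toLp δ i])
  have h₂ : ‖(∑ j, pgrad r θ j * δ j) • toLp 2 (softmax θ)‖ ≤ G * d := by
    rw [norm_smul, Real.norm_eq_abs]
    exact (mul_le_of_le_one_right (abs_nonneg _) (norm_toLp_softmax_le_one θ)).trans
      (abs_sum_mul_le_norm_toLp_mul _ _)
  calc ‖toLp 2 (hessVec r θ δ)‖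
      ≤ ‖toLp 2 (pgrad r θ * fun i => δ i - ∑ j, softmax θ j * δ j)‖
        + ‖(∑ j, pgrad r θ j * δ j) • toLp 2 (softmax θ)‖ := norm_sub_le _ _
    _ ≤ G * (2 * d) + G * d := add_le_add h₁ h₂
    _ = 3 * d * G := by ring

lemma abs_expReward_add_sub_sub_le (θ δ : Fin K → ℝ) (hδ : ‖toLp 2 δ‖ ≤ 1 / 6) :
    |expReward r (θ + δ) - expReward r θ - ∑ i, pgrad r θ i * δ i| ≤
      3 * ‖toLp 2 (pgrad r θ)‖ * ‖toLp 2 δ‖ ^ 2 := by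
  set d := ‖toLp 2 δ‖
  set G := ‖toLp 2 (pgrad r θ)‖
  have hgrad (t : ℝ) (ht : t ∈ Set.Icc (0 : ℝ) 1) :
      ‖toLp 2 (pgrad r (θ + t • δ)) - toLp 2 (pgrad r (θ + (0 : ℝ) • δ))‖ ≤
        2 * (3 * d) * G * t := by
    simpa using norm_sub_le_of_norm_deriv_le_mul_norm (by positivity) (by linarith)
      (hasDerivAt_toLp_pgrad_line r θ δ) (fun s _ => norm_toLp_hessVec_le r _ δ) ht
  have hslope (t : ℝ) (ht : t ∈ Set.Icc (0 : ℝ) 1) :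
      |∑ i, pgrad r (θ + t • δ) i * δ i - ∑ i, pgrad r (θ + (0 : ℝ) • δ) i * δ i| ≤
        6 * G * d ^ 2 * t := by
    rw [← sum_sub_distrib]
    simp_rw [← sub_mul]
    calc _ ≤ ‖toLp 2 (pgrad r (θ + t • δ) - pgrad r (θ + (0 : ℝ) • δ))‖ * d :=
          abs_sum_mul_le_norm_toLp_mul _ _
      _ ≤ 2 * (3 * d) * G * t * d := by gcongr; exact hgrad t ht
      _ = 6 * G * d ^ 2 * t := by ring
  have := abs_sub_sub_deriv_le_of_abs_deriv_sub_le (hasDerivAt_expReward_line r θ δ) hslope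
  simp only [one_smul, zero_smul, add_zero] at this
  linarith

end Smoothness

section RewardBounds

variable {K : ℕ} [NeZero K] {r : Fin K → ℝ}

lemma expReward_mem_Icc (hr : ∀ i, 0 ≤ r i ∧ r i ≤ 1) (θ : Fin K → ℝ) :
    expReward r θ ∈ Set.Icc 0 1 := by
  refine ⟨sum_nonneg fun i _ => mul_nonneg (softmax_pos θ i).le (hr i).1, ?_⟩
  calc expReward r θ ≤ ∑ i, softmax θ i :=
        sum_le_sum fun i _ => mul_le_of_le_one_right (softmax_pos θ i).le (hr i).2
    _ = 1 := sum_softmax θ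

lemma norm_toLp_pgrad_le_one (hr : ∀ i, 0 ≤ r i ∧ r i ≤ 1) (θ : Fin K → ℝ) :
    ‖toLp 2 (pgrad r θ)‖ ≤ 1 := by
  have hF := expReward_mem_Icc hr θ
  calc ‖toLp 2 (pgrad r θ)‖ ≤ ‖toLp 2 (softmax θ)‖ * 1 :=
        norm_toLp_mul_le (softmax θ) (fun i => r i - expReward r θ) zero_le_one fun i =>
          abs_le.2 ⟨by linarith [(hr i).1, hF.2], by linarith [(hr i).2, hF.1]⟩
    _ ≤ 1 := by simpa using norm_toLp_softmax_le_one θ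

lemma norm_toLp_stochPG_le_two (a : Fin K) (hra : |r a| ≤ 1) (θ : Fin K → ℝ) :
    ‖toLp 2 (stochPG r a θ)‖ ≤ 2 := by
  have hg : toLp 2 (stochPG r a θ) = PiLp.single 2 a (r a) - r a • toLp 2 (softmax θ) := by
    ext i
    simp [stochPG, PiLp.single_apply, mul_comm]
  calc ‖toLp 2 (stochPG r a θ)‖ ≤ |r a| + |r a| * ‖toLp 2 (softmax θ)‖ := by
        rw [hg, ← Real.norm_eq_abs, ← norm_smul, ← PiLp.norm_single 2 (fun _ => ℝ) a]
        exact norm_sub_le _ _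
    _ ≤ 1 + 1 * 1 := by
        gcongr
        exact norm_toLp_softmax_le_one θ
    _ = 2 := by norm_num

end RewardBounds

lemma pgradNorm_eq_norm_toLp {K : ℕ} (r θ : Fin K → ℝ) : pgradNorm r θ = ‖toLp 2 (pgrad r θ)‖ := by
  rw [pgradNorm, ← norm_toLp_sq, sqrt_sq (norm_nonneg _)]

theorem nonuniform_smoothness_between_iterations_general
    {K : ℕ} (r : Fin K → ℝ)
    (hr : ∀ a, 0 < r a ∧ r a ≤ 1)
    (θ : Fin K → ℝ) (a : Fin K)
    (η : ℝ) (hη : η = (1 / 12) * pgradNorm r θ)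
    (θ' : Fin K → ℝ) (hθ' : θ' = fun i => θ i + η * stochPG r a θ i) :
    |(expReward r θ' - expReward r θ) - ∑ i, pgrad r θ i * (θ' i - θ i)| ≤
      3 * pgradNorm r θ * ∑ i, (θ' i - θ i) ^ 2 := by
  have : NeZero K := ⟨a.pos.ne'⟩
  obtain rfl : θ' = θ + η • stochPG r a θ := hθ'
  have hG := norm_toLp_pgrad_le_one (fun i => ⟨(hr i).1.le, (hr i).2⟩) θ
  have hg := norm_toLp_stochPG_le_two a (abs_le.2 ⟨by linarith [(hr a).1], (hr a).2⟩) θ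
  rw [pgradNorm_eq_norm_toLp] at hη ⊢
  have hη₀ : 0 ≤ η := hη ▸ by positivity
  simp only [Pi.add_apply, add_sub_cancel_left]
  rw [← norm_toLp_sq]
  refine abs_expReward_add_sub_sub_le r θ _ ?_
  rw [toLp_smul, norm_smul, Real.norm_eq_abs, abs_of_nonneg hη₀, hη]
  nlinarith [norm_nonneg (toLp 2 (pgrad r θ)), norm_nonneg (toLp 2 (stochPG r a θ))]

/-- Non-uniform smoothness between two iterations of stochastic softmax PG: with
`η = (1/12)·‖d(π_θᵀ r)/dθ‖₂` and `θ' = θ + η·g_a(θ)`,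
`|(π_{θ'} − π_θ)ᵀ r − ⟨d(π_θᵀ r)/dθ, θ' − θ⟩| ≤ 3·‖d(π_θᵀ r)/dθ‖₂·‖θ' − θ‖₂²`. -/
theorem nonuniform_smoothness_between_iterations
    {K : ℕ} (hK : 2 ≤ K) (r : Fin K → ℝ)
    (hr : ∀ a, 0 < r a ∧ r a ≤ 1)
    (θ : Fin K → ℝ) (a : Fin K)
    (η : ℝ) (hη : η = (1 / 12) * pgradNorm r θ)
    (θ' : Fin K → ℝ) (hθ' : θ' = fun i => θ i + η * stochPG r a θ i) :
    |(expReward r θ' - expReward r θ) - ∑ i, pgrad r θ i * (θ' i - θ i)| ≤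
      3 * pgradNorm r θ * ∑ i, (θ' i - θ i) ^ 2 :=
  nonuniform_smoothness_between_iterations_general r hr θ a η hη θ' hθ'
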